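/- Let L_0 = ∂_t and L_1 = e^{−t}(∂_t + ∂_x) be vector fields on ℝ³ (coordinates (t,x,u)). A smooth vector field Q on ℝ³ satisfies [L_0, Q] = Q and [L_1, Q] = 2L_0 if and only if there exist C^∞ functions f₁, g₁, h₁ : ℝ → ℝ such that Q = e^{t}(1 − e^{−2x} f₁(u)) ∂_t + e^{t}(−1 − e^{−2x} f₁(u) + e^{−x} g₁(u)) ∂_x + e^{t−x} h₁(u) ∂_u. (This is the general form of L_{−1} obtained in Case 2 of the proof of Lemma 1.) -/

import Mathlib

/-!
Both bracket conditions are linear first-order PDEs for `Q`: `[L₀, Q] = Q` says `∂ₜQ = Q`, and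
given that, `[L₁, Q] = 2L₀` says `∂ₓQ = eᵗ (2, 0, 0) - Q - Q₁ (1, 1, 0)`. Along every line in the
`t`- or `x`-direction these are linear ODEs, so a solution is determined by its values on the
`u`-axis. The displayed family solves the system, and its values `(1 - f₁, -1 - f₁ + g₁, h₁)` on
the axis are arbitrary.
-/

/-- Lie bracket of smooth vector fields on `ℝ³` (coordinates `(t,x,u)`), identified with
`C^∞` maps `ℝ³ → ℝ³`: `[X,Y](p) = (DY)(p)(X(p)) - (DX)(p)(Y(p))`. -/
noncomputable def lieBracket3 (X Y : ℝ × ℝ × ℝ → ℝ × ℝ × ℝ) : ℝ × ℝ × ℝ → ℝ × ℝ × ℝ :=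
  fun p => fderiv ℝ Y p (X p) - fderiv ℝ X p (Y p)

lemma eq_zero_of_hasDerivAt_clm_apply {E : Type*} [NormedAddCommGroup E] [NormedSpace ℝ E]
    (A : E →L[ℝ] E) {y : ℝ → E} (hy : ∀ s, HasDerivAt y (A (y s)) s) {s₀ : ℝ} (h₀ : y s₀ = 0) :
    y = 0 :=
  ODE_solution_unique_univ (v := fun _ => A) (s := fun _ => Set.univ)
    (fun _ => A.lipschitz.lipschitzOnWith) (fun s => ⟨hy s, trivial⟩)
    (fun s => ⟨by simp, trivial⟩) h₀

noncomputable def addFstDiag : ℝ × ℝ × ℝ →L[ℝ] ℝ × ℝ × ℝ :=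
  ContinuousLinearMap.id ℝ _ + (ContinuousLinearMap.fst ℝ ℝ (ℝ × ℝ)).smulRight (1, 1, 0)

lemma addFstDiag_apply (y : ℝ × ℝ × ℝ) : addFstDiag y = y + y.1 • (1, 1, 0) := rfl

def IsBracketSolution (Q : ℝ × ℝ × ℝ → ℝ × ℝ × ℝ) : Prop :=
  ∀ p, fderiv ℝ Q p (1, 0, 0) = Q p ∧
    fderiv ℝ Q p (0, 1, 0) = Real.exp p.1 • (2, 0, 0) - addFstDiag (Q p)

lemma lieBracket3_const_left (c : ℝ × ℝ × ℝ) (Q : ℝ × ℝ × ℝ → ℝ × ℝ × ℝ) :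
    lieBracket3 (fun _ => c) Q = fun p => fderiv ℝ Q p c := by
  ext1 p
  simp [lieBracket3]

lemma exp_neg_fst_smul_diag (q : ℝ × ℝ × ℝ) :
    ((Real.exp (-q.1), Real.exp (-q.1), 0) : ℝ × ℝ × ℝ) = Real.exp (-q.1) • (1, 1, 0) := by
  simp

lemma fderiv_exp_neg_fst_smul_diag_apply (p w : ℝ × ℝ × ℝ) :
    fderiv ℝ (fun q : ℝ × ℝ × ℝ => ((Real.exp (-q.1), Real.exp (-q.1), 0) : ℝ × ℝ × ℝ)) p w =
      -(Real.exp (-p.1) * w.1) • (1, 1, 0) := by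
  simp_rw [exp_neg_fst_smul_diag]
  have h : HasFDerivAt (fun q : ℝ × ℝ × ℝ => Real.exp (-q.1) • ((1, 1, 0) : ℝ × ℝ × ℝ)) _ p :=
    hasFDerivAt_fst.neg.exp.smul_const _
  rw [h.fderiv]
  simp

lemma lieBracket3_exp_neg_fst_smul_diag_apply (Q : ℝ × ℝ × ℝ → ℝ × ℝ × ℝ) (p : ℝ × ℝ × ℝ) :
    lieBracket3 (fun q => (Real.exp (-q.1), Real.exp (-q.1), 0)) Q p =
      Real.exp (-p.1) • (fderiv ℝ Q p (1, 0, 0) + fderiv ℝ Q p (0, 1, 0) + (Q p).1 • (1, 1, 0)) := by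
  have hdiag : ((1, 1, 0) : ℝ × ℝ × ℝ) = (1, 0, 0) + (0, 1, 0) := by simp
  rw [lieBracket3, fderiv_exp_neg_fst_smul_diag_apply, exp_neg_fst_smul_diag, hdiag, map_smul,
    map_add]
  module

lemma lieBrackets_eq_iff_isBracketSolution (Q : ℝ × ℝ × ℝ → ℝ × ℝ × ℝ) :
    (lieBracket3 (fun _ => (1, 0, 0)) Q = Q ∧
      lieBracket3 (fun p => (Real.exp (-p.1), Real.exp (-p.1), 0)) Q = fun _ => (2, 0, 0)) ↔
    IsBracketSolution Q := by
  simp only [IsBracketSolution, lieBracket3_const_left, funext_iff,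
    lieBracket3_exp_neg_fst_smul_diag_apply, ← forall_and]
  refine forall_congr' fun p => and_congr_right fun ht => ?_
  rw [ht, addFstDiag_apply, ← eq_inv_smul_iff₀ (Real.exp_ne_zero _), ← Real.exp_neg, neg_neg,
    eq_sub_iff_add_eq]
  exact Iff.of_eq (congrArg (· = _) (by abel))

section Lines

variable {Q : ℝ × ℝ × ℝ → ℝ × ℝ × ℝ} {t x u : ℝ}

lemma hasDerivAt_tLine (hQ : DifferentiableAt ℝ Q (t, x, u)) :
    HasDerivAt (fun s => Q (s, x, u)) (fderiv ℝ Q (t, x, u) (1, 0, 0)) t :=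
  hQ.hasFDerivAt.comp_hasDerivAt t ((hasDerivAt_id t).prodMk (hasDerivAt_const t (x, u)))

lemma hasDerivAt_xLine (hQ : DifferentiableAt ℝ Q (t, x, u)) :
    HasDerivAt (fun s => Q (t, s, u)) (fderiv ℝ Q (t, x, u) (0, 1, 0)) x :=
  hQ.hasFDerivAt.comp_hasDerivAt x
    ((hasDerivAt_const x t).prodMk ((hasDerivAt_id x).prodMk (hasDerivAt_const x u)))

end Lines

lemma IsBracketSolution.eq_of_eq_on_axis {Q Q' : ℝ × ℝ × ℝ → ℝ × ℝ × ℝ}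
    (hQ : Differentiable ℝ Q) (hQ' : Differentiable ℝ Q')
    (h : IsBracketSolution Q) (h' : IsBracketSolution Q')
    (haxis : ∀ u, Q (0, 0, u) = Q' (0, 0, u)) : Q = Q' := by
  ext1 ⟨t, x, u⟩
  rw [← sub_eq_zero]
  have hx : (fun s => Q (0, s, u) - Q' (0, s, u)) = 0 := by
    refine eq_zero_of_hasDerivAt_clm_apply (-addFstDiag) (fun s => ?_) (s₀ := 0) (by simp [haxis])
    convert (hasDerivAt_xLine (hQ (0, s, u))).fun_sub (hasDerivAt_xLine (hQ' (0, s, u))) using 1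
    rw [(h _).2, (h' _).2, neg_apply, map_sub]
    abel
  have ht : (fun s => Q (s, x, u) - Q' (s, x, u)) = 0 := by
    refine eq_zero_of_hasDerivAt_clm_apply (ContinuousLinearMap.id ℝ _) (fun s => ?_) (s₀ := 0)
      (congrFun hx x)
    have := (hasDerivAt_tLine (hQ (s, x, u))).fun_sub (hasDerivAt_tLine (hQ' (s, x, u)))
    rwa [(h _).1, (h' _).1] at this
  exact congrFun ht t

noncomputable def lminus1Field (f g h : ℝ → ℝ) : ℝ × ℝ × ℝ → ℝ × ℝ × ℝ := fun p =>
  (Real.exp p.1 * (1 - Real.exp (-2 * p.2.1) * f p.2.2),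
   Real.exp p.1 * (-1 - Real.exp (-2 * p.2.1) * f p.2.2 + Real.exp (-p.2.1) * g p.2.2),
   Real.exp (p.1 - p.2.1) * h p.2.2)

section lminus1Field

variable {f g h : ℝ → ℝ}

lemma contDiff_lminus1Field {n : WithTop ℕ∞} (hf : ContDiff ℝ n f) (hg : ContDiff ℝ n g)
    (hh : ContDiff ℝ n h) : ContDiff ℝ n (lminus1Field f g h) := by
  unfold lminus1Field
  fun_prop

lemma lminus1Field_apply (t x u : ℝ) :
    lminus1Field f g h (t, x, u) = Real.exp t •
      ((1, -1, 0) + Real.exp (-x) • (0, g u, h u) + Real.exp (-2 * x) • (-f u, -f u, 0)) := by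
  simp only [lminus1Field, Prod.smul_mk, Prod.mk_add_mk, smul_eq_mul, Prod.mk.injEq]
  refine ⟨by ring, by ring, ?_⟩
  rw [sub_eq_add_neg, Real.exp_add]
  ring

lemma fderiv_lminus1Field_apply_t {p : ℝ × ℝ × ℝ}
    (hd : DifferentiableAt ℝ (lminus1Field f g h) p) :
    fderiv ℝ (lminus1Field f g h) p (1, 0, 0) = lminus1Field f g h p := by
  obtain ⟨t, x, u⟩ := p
  refine (hasDerivAt_tLine hd).unique ?_
  simp only [lminus1Field_apply]
  exact (Real.hasDerivAt_exp t).smul_const _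

lemma fderiv_lminus1Field_apply_x {p : ℝ × ℝ × ℝ}
    (hd : DifferentiableAt ℝ (lminus1Field f g h) p) :
    fderiv ℝ (lminus1Field f g h) p (0, 1, 0) =
      Real.exp p.1 • (2, 0, 0) - addFstDiag (lminus1Field f g h p) := by
  obtain ⟨t, x, u⟩ := p
  refine (hasDerivAt_xLine hd).unique ?_
  have hexp (c : ℝ) : HasDerivAt (fun s => Real.exp (c * s)) (c * Real.exp (c * x)) x := by
    simpa [mul_comm c] using ((hasDerivAt_id x).const_mul c).exp
  have : HasDerivAt (fun s => Real.exp t • ((1, -1, 0) + Real.exp (-1 * s) • (0, g u, h u) +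
        Real.exp (-2 * s) • (-f u, -f u, 0) : ℝ × ℝ × ℝ))
      (Real.exp t • ((-1 * Real.exp (-1 * x)) • (0, g u, h u) +
        (-2 * Real.exp (-2 * x)) • (-f u, -f u, 0) : ℝ × ℝ × ℝ)) x :=
    ((((hexp (-1)).smul_const _).const_add _).fun_add ((hexp (-2)).smul_const _)).fun_const_smul _
  simp only [neg_one_mul] at this
  simp only [lminus1Field_apply]
  refine this.congr_deriv ?_
  simp only [addFstDiag_apply, Prod.smul_mk, Prod.mk_add_mk, Prod.mk_sub_mk, smul_eq_mul,
    Prod.mk.injEq]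
  refine ⟨by ring, by ring, by ring⟩

lemma isBracketSolution_lminus1Field (hd : Differentiable ℝ (lminus1Field f g h)) :
    IsBracketSolution (lminus1Field f g h) :=
  fun p => ⟨fderiv_lminus1Field_apply_t (hd p), fderiv_lminus1Field_apply_x (hd p)⟩

end lminus1Field

lemma exists_lminus1Field_eq_on_axis {Q : ℝ × ℝ × ℝ → ℝ × ℝ × ℝ} {n : WithTop ℕ∞}
    (hQ : ContDiff ℝ n Q) :
    ∃ f g h : ℝ → ℝ, ContDiff ℝ n f ∧ ContDiff ℝ n g ∧ ContDiff ℝ n h ∧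
      ∀ u, lminus1Field f g h (0, 0, u) = Q (0, 0, u) := by
  have hQ₀ : ContDiff ℝ n fun u : ℝ => Q (0, 0, u) := by fun_prop
  refine ⟨fun u => 1 - (Q (0, 0, u)).1, fun u => (Q (0, 0, u)).2.1 + 2 - (Q (0, 0, u)).1,
    fun u => (Q (0, 0, u)).2.2, by fun_prop, by fun_prop, by fun_prop, fun u => ?_⟩
  simp only [lminus1Field, Real.exp_zero, mul_zero, neg_zero, sub_zero, one_mul]
  ext <;> simp only <;> ring

theorem Lminus1_form_case2 (Q : ℝ × ℝ × ℝ → ℝ × ℝ × ℝ)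
    (hQ : ContDiff ℝ (⊤ : ℕ∞) Q) :
    (lieBracket3 (fun _ => (1, 0, 0)) Q = Q ∧
      lieBracket3 (fun p => (Real.exp (-p.1), Real.exp (-p.1), 0)) Q = fun _ => (2, 0, 0)) ↔
    (∃ f₁ g₁ h₁ : ℝ → ℝ, ContDiff ℝ (⊤ : ℕ∞) f₁ ∧ ContDiff ℝ (⊤ : ℕ∞) g₁ ∧
      ContDiff ℝ (⊤ : ℕ∞) h₁ ∧
      Q = fun p =>
        (Real.exp p.1 * (1 - Real.exp (-2 * p.2.1) * f₁ p.2.2),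
         Real.exp p.1 * (-1 - Real.exp (-2 * p.2.1) * f₁ p.2.2 +
           Real.exp (-p.2.1) * g₁ p.2.2),
         Real.exp (p.1 - p.2.1) * h₁ p.2.2)) := by
  rw [lieBrackets_eq_iff_isBracketSolution]
  constructor
  · intro hsol
    obtain ⟨f₁, g₁, h₁, hf, hg, hh, haxis⟩ := exists_lminus1Field_eq_on_axis hQ
    have hd := (contDiff_lminus1Field hf hg hh).differentiable (by simp)
    exact ⟨f₁, g₁, h₁, hf, hg, hh, hsol.eq_of_eq_on_axis (hQ.differentiable (by simp)) hd
      (isBracketSolution_lminus1Field hd) fun u => (haxis u).symm⟩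
  · rintro ⟨f₁, g₁, h₁, hf, hg, hh, rfl⟩
    exact isBracketSolution_lminus1Field ((contDiff_lminus1Field hf hg hh).differentiable (by simp))
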